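/- Let t ∈ (1,2), α ∈ ((t-1)/t, 1/t), r = 1 + 1/α, a > 1 with a^r > 2^{t+2}a, aₙ = a^{rⁿ}; let η satisfy P(η = aₙ) = C aₙ^{-α} with C the normalising constant, U uniform on (0,1) independent of η, and let F be the distribution of ξ = η^{1/t}(1+U)^{1/t}. Then F ∉ OL, i.e., limsup_{x→∞} \bar{F}(x-c)/\bar{F}(x) = ∞ for some c > 0. -/

import Mathlib

open MeasureTheory Filter Set Asymptotics

/-- Tail function of a distribution: `F̄(x) = μ(x, ∞)`. -/
noncomputable def tail (μ : Measure ℝ) (x : ℝ) : ℝ := (μ (Set.Ioi x)).toReal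

/-- `F(a, b] = F(b) - F(a)`. -/
noncomputable def intv (μ : Measure ℝ) (a b : ℝ) : ℝ := (μ (Set.Ioc a b)).toReal

/-- A distribution is long-tailed if `F̄(x+1)/F̄(x) → 1` as `x → ∞`. -/
def LongTailed (μ : Measure ℝ) : Prop :=
  Tendsto (fun x => tail μ (x + 1) / tail μ x) atTop (nhds 1)

/-- Convolution of two distributions on ℝ (law of the sum of independent rvs). -/
noncomputable def mconv (μ ν : Measure ℝ) : Measure ℝ :=
  Measure.map (fun p : ℝ × ℝ => p.1 + p.2) (μ.prod ν)

/-- `n`-fold convolution of a distribution with itself; `nconv μ 0` is the unit mass at 0. -/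
noncomputable def nconv (μ : Measure ℝ) : ℕ → Measure ℝ
  | 0 => Measure.dirac 0
  | n + 1 => mconv (nconv μ n) μ

/-!
On the event `η = aₙ`, `ξ` is spread over `(aₙ ^ (1/t), xₙ]` with `xₙ = (2 aₙ) ^ (1/t)`. Since
`rα = α + 1`, the weights satisfy `aₙ₊₁ ^ (-α) = aₙ ^ (-α) / aₙ`, so the atoms beyond `aₙ` give
`F̄(xₙ) = O(aₙ ^ (-α) / aₙ)`. On the other hand the atom `aₙ` alone puts mass
`aₙ ^ (-α) (xₙ ^ t - (xₙ - 1) ^ t) / aₙ ≥ aₙ ^ (-α) · 2 / xₙ` into `(xₙ - 1, xₙ]`, so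
`F̄(xₙ - 1) / F̄(xₙ) ≳ aₙ / xₙ = xₙ ^ (t - 1) / 2 → ∞`.
-/

theorem tail_map_prod_sum_dirac {g : ℝ × ℝ → ℝ} (hg : Measurable g) {w : ℕ → ℝ}
    (hw : ∀ n, 0 ≤ w n) (b : ℕ → ℝ) (ν : Measure ℝ) [IsFiniteMeasure ν] (x : ℝ) :
    tail (Measure.map g
        ((Measure.sum fun n => ENNReal.ofReal (w n) • Measure.dirac (b n)).prod ν)) x =
      ∑' n, w n * (ν (Prod.mk (b n) ⁻¹' (g ⁻¹' Ioi x))).toReal := by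
  have hS : MeasurableSet (g ⁻¹' Ioi x) := hg measurableSet_Ioi
  have hterm : ∀ n, ((ENNReal.ofReal (w n) • Measure.dirac (b n)).prod ν) (g ⁻¹' Ioi x) =
      ENNReal.ofReal (w n) * ν (Prod.mk (b n) ⁻¹' (g ⁻¹' Ioi x)) := fun n => by
    rw [Measure.prod_smul_left, Measure.smul_apply, Measure.dirac_prod,
      Measure.map_apply measurable_prodMk_left hS, smul_eq_mul]
  rw [tail, Measure.map_apply hg measurableSet_Ioi, Measure.prod_sum_left, Measure.sum_apply _ hS,
    ENNReal.tsum_toReal_eq fun n => hterm n ▸ ENNReal.mul_ne_top ENNReal.ofReal_ne_top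
      (measure_ne_top _ _)]
  simp only [hterm, ENNReal.toReal_mul, ENNReal.toReal_ofReal (hw _)]

theorem tail_volume_restrict_Ioo_zero_one (s : ℝ) :
    tail (volume.restrict (Ioo (0 : ℝ) 1)) s = max 0 (min 1 (1 - s)) := by
  rw [tail, Measure.restrict_apply measurableSet_Ioi, inter_comm, Ioo_inter_Ioi, Real.volume_Ioo,
    ENNReal.toReal_ofReal']
  grind

theorem tail_volume_restrict_Ioo_le_one (s : ℝ) : tail (volume.restrict (Ioo (0 : ℝ) 1)) s ≤ 1 := by
  rw [tail_volume_restrict_Ioo_zero_one]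
  exact max_le zero_le_one (min_le_left _ _)

theorem tail_volume_restrict_Ioo_of_one_le {s : ℝ} (hs : 1 ≤ s) :
    tail (volume.restrict (Ioo (0 : ℝ) 1)) s = 0 := by
  rw [tail_volume_restrict_Ioo_zero_one, max_eq_left (min_le_of_right_le (by linarith))]

theorem measure_restrict_Ioo_preimage_rpow_mul_rpow {t b x : ℝ} (ht : 0 < t) (hb : 0 < b)
    (hx : 0 ≤ x) :
    volume.restrict (Ioo (0 : ℝ) 1)
        (Prod.mk b ⁻¹' ((fun q : ℝ × ℝ => q.1 ^ (1 / t) * (1 + q.2) ^ (1 / t)) ⁻¹' Ioi x)) =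
      volume.restrict (Ioo (0 : ℝ) 1) (Ioi (x ^ t / b - 1)) := by
  rw [Measure.restrict_apply' measurableSet_Ioo, Measure.restrict_apply' measurableSet_Ioo]
  congr 1
  ext u
  simp only [mem_inter_iff, mem_preimage, mem_Ioi, mem_Ioo, and_congr_left_iff]
  rintro ⟨hu, -⟩
  rw [← Real.mul_rpow hb.le (by linarith), one_div, Real.lt_rpow_inv_iff_of_pos hx
    (by positivity) ht, sub_lt_iff_lt_add, div_lt_iff₀ hb, add_comm u, mul_comm]

theorem le_pow_mul_of_succ_le_mul {w : ℕ → ℝ} {q : ℝ} (h : ∀ n, w (n + 1) ≤ q * w n)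
    (hq : 0 ≤ q) (m k : ℕ) : w (k + m) ≤ q ^ k * w m := by
  induction k with
  | zero => simp
  | succ k ih =>
    calc w (k + 1 + m) ≤ q * w (k + m) := by rw [add_right_comm]; exact h _
      _ ≤ q * (q ^ k * w m) := mul_le_mul_of_nonneg_left ih hq
      _ = q ^ (k + 1) * w m := by ring

theorem summable_of_succ_le_mul {w : ℕ → ℝ} {q : ℝ} (hw : ∀ n, 0 ≤ w n)
    (h : ∀ n, w (n + 1) ≤ q * w n) (hq0 : 0 ≤ q) (hq1 : q < 1) : Summable w :=
  ((summable_geometric_of_lt_one hq0 hq1).mul_right (w 0)).of_nonneg_of_le hw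
    (le_pow_mul_of_succ_le_mul h hq0 0)

theorem tsum_nat_add_le_of_succ_le_mul {w : ℕ → ℝ} {q : ℝ} (hw : ∀ n, 0 ≤ w n)
    (h : ∀ n, w (n + 1) ≤ q * w n) (hq0 : 0 ≤ q) (hq1 : q < 1) (m : ℕ) :
    ∑' k, w (k + m) ≤ w m / (1 - q) := by
  have hgeom := (summable_geometric_of_lt_one hq0 hq1).mul_right (w m)
  calc ∑' k, w (k + m) ≤ ∑' k, q ^ k * w m :=
        ((summable_nat_add_iff m).2 (summable_of_succ_le_mul hw h hq0 hq1)).tsum_le_tsum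
          (le_pow_mul_of_succ_le_mul h hq0 m) hgeom
    _ = w m / (1 - q) := by rw [tsum_mul_right, tsum_geometric_of_lt_one hq0 hq1, div_eq_inv_mul]

theorem sub_one_rpow_le {x t : ℝ} (hx : 1 ≤ x) (ht : 1 ≤ t) :
    (x - 1) ^ t ≤ x ^ t - x ^ (t - 1) := by
  have hx0 : 0 < x := by linarith
  calc (x - 1) ^ t = (x - 1) * (x - 1) ^ (t - 1) := by
        rw [← Real.rpow_one_add' (by linarith) (by linarith), add_sub_cancel]
    _ ≤ (x - 1) * x ^ (t - 1) :=
        mul_le_mul_of_nonneg_left (Real.rpow_le_rpow (by linarith) (by linarith) (by linarith))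
          (by linarith)
    _ = x ^ t - x ^ (t - 1) := by
        rw [sub_mul, one_mul, ← Real.rpow_one_add' hx0.le (by linarith), add_sub_cancel]

theorem two_div_le_tail_volume_restrict_Ioo {t x : ℝ} (ht : 1 ≤ t) (hx : 2 ≤ x) :
    2 / x ≤ tail (volume.restrict (Ioo (0 : ℝ) 1)) ((x - 1) ^ t / (x ^ t / 2) - 1) := by
  have hx0 : 0 < x := by linarith
  have hxt : 0 < x ^ t := by positivity
  have key : x ^ t / x ≤ x ^ t - (x - 1) ^ t := by
    have := sub_one_rpow_le (by linarith : 1 ≤ x) ht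
    rw [Real.rpow_sub_one hx0.ne'] at this
    linarith
  rw [tail_volume_restrict_Ioo_zero_one, show 1 - ((x - 1) ^ t / (x ^ t / 2) - 1) =
    2 * (x ^ t - (x - 1) ^ t) / x ^ t by field_simp; ring]
  refine le_max_of_le_right (le_min ((div_le_one hx0).2 hx) ?_)
  rw [le_div_iff₀ hxt]
  linarith [show 2 / x * x ^ t = 2 * (x ^ t / x) by ring]

/-- The tail `P((η (1 + U)) ^ (1 / t) > x)`, for `x ≥ 0`, when `P(η = b n) = w n` and `U` is uniform
on `(0, 1)` independent of `η`. -/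
noncomputable def mixtureTail (t : ℝ) (w b : ℕ → ℝ) (x : ℝ) : ℝ :=
  ∑' n, w n * tail (volume.restrict (Ioo (0 : ℝ) 1)) (x ^ t / b n - 1)

section mixtureTail

variable {t : ℝ} {w b : ℕ → ℝ}

theorem summable_mul_tail_volume_restrict_Ioo (hw : ∀ n, 0 ≤ w n) (hsum : Summable w) (x : ℝ) :
    Summable fun n => w n * tail (volume.restrict (Ioo (0 : ℝ) 1)) (x ^ t / b n - 1) := by
  refine hsum.of_nonneg_of_le (fun n => mul_nonneg (hw n) ENNReal.toReal_nonneg) fun n => ?_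
  exact mul_le_of_le_one_right (hw n) (tail_volume_restrict_Ioo_le_one _)

theorem mixtureTail_le {q : ℝ} (hw : ∀ n, 0 ≤ w n) (h : ∀ n, w (n + 1) ≤ q * w n) (hq0 : 0 ≤ q)
    (hq1 : q < 1) (hb : ∀ n, 0 < b n) (hb_mono : Monotone b) {n : ℕ} {x : ℝ}
    (hx : x ^ t = 2 * b n) : mixtureTail t w b x ≤ w (n + 1) / (1 - q) := by
  have hsum := summable_of_succ_le_mul hw h hq0 hq1
  have hvanish : ∀ m ∈ Finset.range (n + 1),
      w m * tail (volume.restrict (Ioo (0 : ℝ) 1)) (x ^ t / b m - 1) = 0 := fun m hm => by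
    have h2 : 2 ≤ x ^ t / b m := by
      rw [le_div_iff₀ (hb m), hx, mul_comm, mul_comm 2]
      exact mul_le_mul_of_nonneg_right (hb_mono (Finset.mem_range_succ_iff.1 hm)) zero_le_two
    rw [tail_volume_restrict_Ioo_of_one_le (by linarith), mul_zero]
  have hf := summable_mul_tail_volume_restrict_Ioo (b := b) (t := t) hw hsum x
  rw [mixtureTail, ← hf.sum_add_tsum_nat_add (n + 1), Finset.sum_eq_zero hvanish, zero_add]
  calc _ ≤ ∑' k, w (k + (n + 1)) := by
        refine (hf.comp_injective (add_left_injective _)).tsum_le_tsum (fun _ => ?_)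
          ((summable_nat_add_iff _).2 hsum)
        exact mul_le_of_le_one_right (hw _) (tail_volume_restrict_Ioo_le_one _)
    _ ≤ w (n + 1) / (1 - q) := tsum_nat_add_le_of_succ_le_mul hw h hq0 hq1 _

theorem le_mixtureTail_sub_one (ht : 1 ≤ t) (hw : ∀ n, 0 ≤ w n) (hsum : Summable w) {n : ℕ}
    {x : ℝ} (hx2 : 2 ≤ x) (hx : x ^ t = 2 * b n) : w n * (2 / x) ≤ mixtureTail t w b (x - 1) := by
  have hbn : b n = x ^ t / 2 := by rw [hx]; ring
  calc w n * (2 / x)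
      ≤ w n * tail (volume.restrict (Ioo (0 : ℝ) 1)) ((x - 1) ^ t / b n - 1) := by
        rw [hbn]
        exact mul_le_mul_of_nonneg_left (two_div_le_tail_volume_restrict_Ioo ht hx2) (hw n)
    _ ≤ mixtureTail t w b (x - 1) :=
        (summable_mul_tail_volume_restrict_Ioo hw hsum _).le_tsum n fun m _ =>
          mul_nonneg (hw m) ENNReal.toReal_nonneg

end mixtureTail

theorem succ_le_inv_mul_of_succ_eq_div {w b : ℕ → ℝ} {a : ℝ} (ha : 0 < a) (hw : ∀ n, 0 ≤ w n)
    (hab : ∀ n, a ≤ b n) (hw_succ : ∀ n, w (n + 1) = w n / b n) (n : ℕ) :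
    w (n + 1) ≤ a⁻¹ * w n := by
  rw [hw_succ, ← div_eq_inv_mul]
  exact div_le_div_of_nonneg_left (hw n) ha (hab n)

theorem frequently_mul_tail_lt_tail_sub_one {F : Measure ℝ} {t a : ℝ} {w b : ℕ → ℝ}
    (ht : 1 < t) (ha : 1 < a) (hw : ∀ n, 0 < w n) (hab : ∀ n, a ≤ b n) (hb_mono : Monotone b)
    (hb_top : Tendsto b atTop atTop) (hw_succ : ∀ n, w (n + 1) = w n / b n)
    (hF : ∀ x, 0 ≤ x → tail F x = mixtureTail t w b x) (M : ℝ) :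
    ∃ᶠ x in atTop, M * tail F x < tail F (x - 1) := by
  have hb : ∀ n, 0 < b n := fun n => by linarith [hab n]
  have hw0 : ∀ n, 0 ≤ w n := fun n => (hw n).le
  have hq := succ_le_inv_mul_of_succ_eq_div (by linarith) hw0 hab hw_succ
  have hq0 : 0 ≤ a⁻¹ := by positivity
  have hq1 : a⁻¹ < 1 := inv_lt_one_of_one_lt₀ ha
  -- `x n` is the right end of the support of `ξ` on the event `η = b n`
  set x : ℕ → ℝ := fun n => (2 * b n) ^ (1 / t)
  have hx_pow : ∀ n, x n ^ t = 2 * b n := fun n => by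
    rw [← Real.rpow_mul (by linarith [hb n]), one_div_mul_cancel (by linarith), Real.rpow_one]
  have hx_top : Tendsto x atTop atTop :=
    (tendsto_rpow_atTop (by positivity)).comp (hb_top.const_mul_atTop two_pos)
  refine hx_top.frequently (Eventually.frequently ?_)
  filter_upwards [hx_top.eventually_ge_atTop 2,
    ((tendsto_rpow_atTop (sub_pos.2 ht)).comp hx_top).eventually_gt_atTop (max M 0 / (1 - a⁻¹))]
    with n hx2 hxM
  have hx0 : 0 < x n := by linarith
  have hxt : 0 < x n ^ (t - 1) := by positivity
  have hA : 0 < w n * (2 / x n) := by have := hw n; positivity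
  calc M * tail F (x n) ≤ max M 0 * tail F (x n) :=
        mul_le_mul_of_nonneg_right (le_max_left _ _) ENNReal.toReal_nonneg
    _ ≤ max M 0 * (w (n + 1) / (1 - a⁻¹)) := by
        rw [hF _ hx0.le]
        exact mul_le_mul_of_nonneg_left (mixtureTail_le hw0 hq hq0 hq1 hb hb_mono (hx_pow n))
          (le_max_right _ _)
    _ = w n * (2 / x n) * (max M 0 / (1 - a⁻¹) / x n ^ (t - 1)) := by
        rw [hw_succ, Real.rpow_sub_one hx0.ne', hx_pow]
        field_simp
    _ < w n * (2 / x n) := mul_lt_of_lt_one_right hA ((div_lt_one hxt).2 hxM)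
    _ ≤ tail F (x n - 1) := by
        rw [hF _ (by linarith)]
        exact le_mixtureTail_sub_one ht.le hw0 (summable_of_succ_le_mul hw0 hq hq0 hq1) hx2
          (hx_pow n)

theorem self_le_rpow_pow {a r : ℝ} (ha : 1 ≤ a) (hr : 1 ≤ r) (n : ℕ) : a ≤ a ^ r ^ n :=
  Real.self_le_rpow_of_one_le ha (one_le_pow₀ hr)

theorem monotone_rpow_pow {a r : ℝ} (ha : 1 ≤ a) (hr : 1 ≤ r) :
    Monotone fun n : ℕ => a ^ r ^ n :=
  fun _ _ hmn => Real.rpow_le_rpow_of_exponent_le ha (pow_right_mono₀ hr hmn)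

theorem tendsto_rpow_pow_atTop {a r : ℝ} (ha : 1 < a) (hr : 1 < r) :
    Tendsto (fun n : ℕ => a ^ r ^ n) atTop atTop := by
  simp_rw [Real.rpow_def_of_pos (zero_lt_one.trans ha)]
  exact Real.tendsto_exp_atTop.comp
    ((tendsto_pow_atTop_atTop_of_one_lt hr).const_mul_atTop (Real.log_pos ha))

theorem rpow_rpow_neg_of_eq_one_add_inv {b α r : ℝ} (hb : 0 < b) (hα : α ≠ 0)
    (hr : r = 1 + 1 / α) : (b ^ r) ^ (-α) = b ^ (-α) / b := by
  rw [← Real.rpow_mul hb.le, ← Real.rpow_sub_one hb.ne', hr]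
  congr 1
  field_simp
  ring

theorem stmt18_general (α t r a : ℝ) (ht : t ∈ Set.Ioo (1:ℝ) 2)
    (hα : α ∈ Set.Ioo ((t - 1) / t) (1 / t))
    (hr : r = 1 + 1/α) (ha : 1 < a)
    (aseq : ℕ → ℝ) (haseq : ∀ n, aseq n = a ^ (r ^ n))
    (C : ℝ) (hC : C = (∑' n : ℕ, aseq n ^ (-α))⁻¹)
    (ηlaw : Measure ℝ)
    (hη : ηlaw = Measure.sum
      (fun n => ENNReal.ofReal (C * aseq n ^ (-α)) • Measure.dirac (aseq n)))
    (Ulaw : Measure ℝ) (hU : Ulaw = MeasureTheory.volume.restrict (Set.Ioo (0:ℝ) 1))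
    (F : Measure ℝ)
    (hF : F = Measure.map (fun q : ℝ × ℝ => q.1 ^ (1/t) * (1 + q.2) ^ (1/t))
      (ηlaw.prod Ulaw)) :
    ∃ c > 0, ∀ M : ℝ, ∃ᶠ x in atTop, M * tail F x < tail F (x - c) := by
  obtain ⟨ht1, -⟩ := ht
  have hα0 : 0 < α := (div_pos (by linarith) (by linarith)).trans hα.1
  have hr1 : 1 < r := by rw [hr]; linarith [one_div_pos.2 hα0]
  have ha0 : 0 < a := by linarith
  obtain rfl : aseq = fun n => a ^ r ^ n := funext haseq
  beta_reduce at hC hη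
  have hstep : ∀ n : ℕ, (a ^ r ^ (n + 1)) ^ (-α) = (a ^ r ^ n) ^ (-α) / a ^ r ^ n := fun n => by
    rw [pow_succ, Real.rpow_mul ha0.le,
      rpow_rpow_neg_of_eq_one_add_inv (by positivity) hα0.ne' hr]
  have hsum : Summable fun n : ℕ => (a ^ r ^ n) ^ (-α) :=
    summable_of_succ_le_mul (fun n => by positivity)
      (succ_le_inv_mul_of_succ_eq_div (w := fun n : ℕ => (a ^ r ^ n) ^ (-α)) ha0
        (fun n => by positivity)
        (self_le_rpow_pow ha.le hr1.le) hstep) (inv_nonneg.2 ha0.le) (inv_lt_one_of_one_lt₀ ha)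
  have hC0 : 0 < C := hC ▸ inv_pos.2 (hsum.tsum_pos (fun n => by positivity) 0 (by positivity))
  refine ⟨1, one_pos, frequently_mul_tail_lt_tail_sub_one
    (w := fun n => C * (a ^ r ^ n) ^ (-α)) ht1 ha
    (fun n => by positivity) (self_le_rpow_pow ha.le hr1.le) (monotone_rpow_pow ha.le hr1.le)
    (tendsto_rpow_pow_atTop ha hr1) (fun n => by rw [hstep, mul_div_assoc]) fun x hx => ?_⟩
  subst hF hη hU
  rw [tail_map_prod_sum_dirac (by fun_prop) (fun n => by positivity)]
  exact tsum_congr fun n => by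
    rw [measure_restrict_Ioo_preimage_rpow_mul_rpow (by linarith) (by positivity) hx]
    rfl

/-- For the family F₂(0): ξ = η^{1/t} (1 + U)^{1/t} with t ∈ (1,2) and
α ∈ ((t-1)/t, 1/t), the distribution F is not in OL: for some c > 0 the ratio
tail F (x - c) / tail F x is unbounded along x → ∞. -/
theorem stmt18 (α t r a : ℝ) (ht : t ∈ Set.Ioo (1:ℝ) 2)
    (hα : α ∈ Set.Ioo ((t - 1) / t) (1 / t))
    (hr : r = 1 + 1/α) (ha : 1 < a) (ha2 : 2 ^ (t + 2) * a < a ^ r)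
    (aseq : ℕ → ℝ) (haseq : ∀ n, aseq n = a ^ (r ^ n))
    (C : ℝ) (hC : C = (∑' n : ℕ, aseq n ^ (-α))⁻¹)
    (ηlaw : Measure ℝ)
    (hη : ηlaw = Measure.sum
      (fun n => ENNReal.ofReal (C * aseq n ^ (-α)) • Measure.dirac (aseq n)))
    (Ulaw : Measure ℝ) (hU : Ulaw = MeasureTheory.volume.restrict (Set.Ioo (0:ℝ) 1))
    (F : Measure ℝ)
    (hF : F = Measure.map (fun q : ℝ × ℝ => q.1 ^ (1/t) * (1 + q.2) ^ (1/t))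
      (ηlaw.prod Ulaw)) :
    ∃ c > 0, ∀ M : ℝ, ∃ᶠ x in atTop, M * tail F x < tail F (x - c) :=
  stmt18_general α t r a ht hα hr ha aseq haseq C hC ηlaw hη Ulaw hU F hF
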